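/- Let d ≥ 2 and, for 1 ≤ r ≤ d−1, define S_r(x) as the average over all C(d,r) size-r subsets R of {1,...,d} of max{x_j : j ∈ R}. Then there exist β₀ ∈ ℝ and β₁,...,β_{d−1} ∈ ℝ such that sup_{x ∈ [0,1]^d} |max_i x_i − β₀ − Σ_{r=1}^{d−1} β_r S_r(x)| ≤ 1/2^d. -/

import Mathlib

/-!
Sort `x` increasingly as `y₀ ≤ ⋯ ≤ y_{d-1}`. An `r`-subset whose largest sorted index is `k`
has maximum `y_k`, and there are `C(k, r-1)` such subsets, so `C(d,r) S_r(x) = ∑ₖ C(k,r-1) yₖ`;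
for `r = d` this is `max x`. With `β_r = -(-1/2)^{d-r} C(d,r)` the binomial theorem collapses
`∑_{r=1}^{d} (-1/2)^{d-r} ∑ₖ C(k,r-1) yₖ` to `2^{1-d} ∑ₖ (-1)^{d-1-k} yₖ`, and an alternating sum
of an increasing sequence in `[0,1]` that ends with a plus sign lies in `[0,1]`. So with
`β₀ = 2^{-d}` the error is `2^{1-d} A - 2^{-d}` for some `A ∈ [0,1]`.
-/

open Finset

theorem alternating_sum_mem_Icc_of_monotone {n : ℕ} {y : Fin (n + 1) → ℝ} (hy : Monotone y)
    {b : ℝ} (hyb : ∀ i, y i ∈ Set.Icc 0 b) :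
    ∑ k : Fin (n + 1), (-1) ^ (n - k) * y k ∈ Set.Icc 0 b := by
  induction n generalizing b with
  | zero => simpa using hyb 0
  | succ n ih =>
    have hinit : ∑ k : Fin (n + 1), (-1) ^ (n - k) * y k.castSucc ∈ Set.Icc 0 (y (Fin.last _)) :=
      ih (hy.comp Fin.strictMono_castSucc.monotone) fun i => ⟨(hyb _).1, hy (Fin.le_last _)⟩
    have hpeel : ∑ k : Fin (n + 2), (-1) ^ (n + 1 - k) * y k
        = y (Fin.last _) - ∑ k : Fin (n + 1), (-1) ^ (n - k) * y k.castSucc := by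
      rw [Fin.sum_univ_castSucc, Fin.val_last, Nat.sub_self, pow_zero, one_mul, sub_eq_neg_add,
        ← sum_neg_distrib]
      congr 1
      refine sum_congr rfl fun k _ => ?_
      rw [Fin.val_castSucc, show n + 1 - k = n - k + 1 by omega, pow_succ]
      ring
    rw [hpeel]
    exact ⟨by linarith [hinit.2], by linarith [hinit.1, (hyb (Fin.last _)).2]⟩

theorem sum_range_neg_half_pow_mul_choose {n k : ℕ} (hk : k ≤ n) :
    ∑ s ∈ range (n + 1), (-1 / 2 : ℝ) ^ (n - s) * k.choose s = (-1) ^ (n - k) * (1 / 2) ^ n := by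
  have htrunc : ∑ s ∈ range (k + 1), (-1 / 2 : ℝ) ^ (n - s) * k.choose s
      = ∑ s ∈ range (n + 1), (-1 / 2 : ℝ) ^ (n - s) * k.choose s :=
    sum_subset (range_subset_range.2 (by omega)) fun s _ hs => by
      rw [Nat.choose_eq_zero_of_lt (by simpa using hs), Nat.cast_zero, mul_zero]
  rw [← htrunc]
  calc ∑ s ∈ range (k + 1), (-1 / 2 : ℝ) ^ (n - s) * k.choose s
      = (-1 / 2) ^ (n - k) * ∑ s ∈ range (k + 1), 1 ^ s * (-1 / 2 : ℝ) ^ (k - s) * k.choose s := by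
        rw [mul_sum]
        refine sum_congr rfl fun s hs => ?_
        rw [show n - s = n - k + (k - s) by simp at hs; omega, pow_add]
        ring
    _ = (-1 / 2) ^ (n - k) * (1 / 2) ^ k := by rw [← add_pow]; norm_num
    _ = (-1) ^ (n - k) * (1 / 2) ^ n := by
        rw [neg_div, neg_eq_neg_one_mul, mul_pow, mul_assoc, ← pow_add, Nat.sub_add_cancel hk]

theorem sum_neg_half_pow_mul_sum_choose_mul {n : ℕ} (y : Fin (n + 1) → ℝ) :
    ∑ s ∈ range (n + 1), (-1 / 2 : ℝ) ^ (n - s) * ∑ k : Fin (n + 1), (k : ℕ).choose s * y k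
      = (1 / 2) ^ n * ∑ k : Fin (n + 1), (-1) ^ (n - k) * y k := by
  simp_rw [mul_sum, ← mul_assoc]
  rw [sum_comm]
  refine sum_congr rfl fun k _ => ?_
  rw [← sum_mul, sum_range_neg_half_pow_mul_choose (Nat.lt_succ_iff.1 k.isLt)]
  ring

theorem sup'_insert_eq_of_monotone {α β : Type*} [Preorder α] [DecidableEq α] [SemilatticeSup β]
    {y : α → β} (hy : Monotone y) {k : α} {T : Finset α} (hT : ∀ j ∈ T, j ≤ k) :
    (insert k T).sup' (insert_nonempty k T) y = y k :=
  le_antisymm (sup'_le _ _ fun j hj => hy (by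
      rcases mem_insert.1 hj with rfl | hj
      · exact le_rfl
      · exact hT j hj))
    (le_sup' y (mem_insert_self k T))

section SubsetMaxSum

variable {α : Type*} [Fintype α] [LinearOrder α]

theorem sum_powersetCard_succ_eq_sum_insert [LocallyFiniteOrderBot α] {M : Type*}
    [AddCommMonoid M] (m : ℕ) (f : Finset α → M) :
    ∑ R ∈ powersetCard (m + 1) univ, f R
      = ∑ k, ∑ T ∈ powersetCard m (Iio k), f (insert k T) := by
  have hne : ∀ R ∈ powersetCard (m + 1) (univ : Finset α), R.Nonempty := fun R hR =>
    card_pos.1 (by rw [(mem_powersetCard.1 hR).2]; omega)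
  rw [sum_sigma']
  symm
  refine sum_bij' (fun p _ => insert p.1 p.2)
    (fun R hR => ⟨R.max' (hne R hR), R.erase (R.max' (hne R hR))⟩) ?_ ?_ ?_ ?_ fun _ _ => rfl
  · rintro ⟨k, T⟩ hT
    simp only [mem_sigma, mem_powersetCard] at hT
    have hk : k ∉ T := fun h => lt_irrefl k (mem_Iio.1 (hT.2.1 h))
    simp [card_insert_of_notMem hk, hT.2.2]
  · intro R hR
    simp only [mem_sigma, mem_univ, mem_powersetCard, true_and]
    refine ⟨fun j hj => ?_, ?_⟩
    · rw [mem_erase] at hj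
      exact mem_Iio.2 (lt_of_le_of_ne (le_max' R j hj.2) hj.1)
    · rw [card_erase_of_mem (max'_mem _ _), (mem_powersetCard.1 hR).2, Nat.add_sub_cancel]
  · rintro ⟨k, T⟩ hT
    simp only [mem_sigma, mem_powersetCard] at hT
    have hk : k ∉ T := fun h => lt_irrefl k (mem_Iio.1 (hT.2.1 h))
    have hmax : (insert k T).max' (insert_nonempty k T) = k := by
      rw [max'_eq_sup']
      exact sup'_insert_eq_of_monotone monotone_id fun j hj => (mem_Iio.1 (hT.2.1 hj)).le
    simp only [hmax, erase_insert hk]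
  · intro R hR
    exact insert_erase (max'_mem R (hne R hR))

-- `C(#α, r) • S_r(x)` in the paper's notation; the `else` branch only occurs for `r = 0`.
noncomputable def subsetMaxSum (r : ℕ) (x : α → ℝ) : ℝ :=
  ∑ R ∈ powersetCard r univ, if h : R.Nonempty then R.sup' h x else 0

theorem subsetMaxSum_comp_equiv (σ : α ≃ α) (r : ℕ) (x : α → ℝ) :
    subsetMaxSum r (x ∘ σ) = subsetMaxSum r x := by
  refine sum_equiv σ.finsetCongr (fun R => by simp) fun R _ => ?_
  simp only [Equiv.finsetCongr_apply, map_nonempty, sup'_map]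
  rfl

theorem subsetMaxSum_succ_of_monotone [LocallyFiniteOrderBot α] {y : α → ℝ} (hy : Monotone y)
    (m : ℕ) : subsetMaxSum (m + 1) y = ∑ k, ((Iio k).card.choose m : ℝ) * y k := by
  rw [subsetMaxSum, sum_powersetCard_succ_eq_sum_insert]
  refine sum_congr rfl fun k _ => ?_
  rw [← card_powersetCard, ← nsmul_eq_mul, ← sum_const]
  refine sum_congr rfl fun T hT => ?_
  rw [dif_pos (insert_nonempty k T)]
  exact sup'_insert_eq_of_monotone hy fun j hj => (mem_Iio.1 ((mem_powersetCard.1 hT).1 hj)).le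

theorem sum_attach_sup'_eq_subsetMaxSum {r : ℕ} (hr : 1 ≤ r) (x : α → ℝ) :
    ∑ R ∈ (powersetCard r (univ : Finset α)).attach,
      R.1.sup' (card_pos.mp (by rw [(mem_powersetCard.mp R.2).2]; exact hr)) x
      = subsetMaxSum r x := by
  rw [subsetMaxSum, ← sum_attach (powersetCard r univ)]
  exact sum_congr rfl fun R _ => by rw [dif_pos]

theorem sup'_univ_eq_subsetMaxSum_card (h : (univ : Finset α).Nonempty) (x : α → ℝ) :
    univ.sup' h x = subsetMaxSum (Fintype.card α) x := by
  rw [subsetMaxSum, ← card_univ, powersetCard_self, sum_singleton, dif_pos h]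

end SubsetMaxSum

theorem subsetMaxSum_succ_eq_sum_choose_mul_sort {n : ℕ} (x : Fin n → ℝ) (m : ℕ) :
    subsetMaxSum (m + 1) x = ∑ k : Fin n, ((k : ℕ).choose m : ℝ) * x (Tuple.sort x k) := by
  rw [← subsetMaxSum_comp_equiv (Tuple.sort x),
    subsetMaxSum_succ_of_monotone (Tuple.monotone_sort x)]
  simp only [Fin.card_Iio, Function.comp_apply]

theorem abs_half_pow_mul_sub_le {n : ℕ} {A : ℝ} (hA : A ∈ Set.Icc 0 1) :
    |(1 / 2) ^ n * A - 1 / 2 ^ (n + 1)| ≤ 1 / 2 ^ (n + 1) := by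
  have hhalf : (1 / 2 : ℝ) ^ n = 2 * (1 / 2 ^ (n + 1)) := by
    rw [pow_succ, one_div_pow]; field_simp
  rw [hhalf, abs_le]
  constructor <;> nlinarith [hA.1, hA.2, (by positivity : (0 : ℝ) < 1 / 2 ^ (n + 1))]

theorem stmt8 (d : ℕ) (hd : 2 ≤ d)
    (S : ℕ → (Fin d → ℝ) → ℝ)
    (hS : ∀ (r : ℕ) (hr : 1 ≤ r) (hrd : r ≤ d) (x : Fin d → ℝ),
      S r x = (1 / (d.choose r) : ℝ) *
        ∑ R ∈ (Finset.powersetCard r (Finset.univ : Finset (Fin d))).attach,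
          R.1.sup' (Finset.card_pos.mp (by
            rw [(Finset.mem_powersetCard.mp R.2).2]; exact hr)) x) :
    ∃ β₀ : ℝ, ∃ β : ℕ → ℝ,
      ∀ x : Fin d → ℝ, (∀ i, x i ∈ Set.Icc (0 : ℝ) 1) →
        |Finset.univ.sup' (Finset.univ_nonempty_iff.mpr
            (Fin.pos_iff_nonempty.mp (by omega))) x
          - β₀ - ∑ r ∈ Finset.Icc 1 (d - 1), β r * S r x| ≤ 1 / 2 ^ d := by
  obtain ⟨n, rfl⟩ : ∃ n, d = n + 1 := ⟨d - 1, by omega⟩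
  refine ⟨1 / 2 ^ (n + 1), fun r => -(-1 / 2 : ℝ) ^ (n + 1 - r) * (n + 1).choose r, fun x hx => ?_⟩
  have hterm : ∀ r ∈ Icc 1 n, -(-1 / 2 : ℝ) ^ (n + 1 - r) * (n + 1).choose r * S r x
      = -((-1 / 2) ^ (n + 1 - r) * subsetMaxSum r x) := fun r hr => by
    obtain ⟨hr1, hrn⟩ := mem_Icc.1 hr
    have hchoose : ((n + 1).choose r : ℝ) ≠ 0 := by exact_mod_cast (Nat.choose_pos (by omega)).ne'
    rw [hS r hr1 (by omega), sum_attach_sup'_eq_subsetMaxSum hr1]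
    field_simp
  have hshift : ∑ r ∈ Icc 1 n, (-1 / 2 : ℝ) ^ (n + 1 - r) * subsetMaxSum r x
      = ∑ s ∈ range n, (-1 / 2 : ℝ) ^ (n - s) * subsetMaxSum (s + 1) x := by
    rw [← Ico_add_one_right_eq_Icc, sum_Ico_eq_sum_range, Nat.add_sub_cancel]
    exact sum_congr rfl fun s _ => by rw [add_comm 1 s, Nat.add_sub_add_right]
  have hexpr : univ.sup' univ_nonempty x - 1 / 2 ^ (n + 1)
      - ∑ r ∈ Icc 1 (n + 1 - 1), -(-1 / 2 : ℝ) ^ (n + 1 - r) * (n + 1).choose r * S r x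
      = (1 / 2) ^ n * ∑ k : Fin (n + 1), (-1) ^ (n - k) * x (Tuple.sort x k) - 1 / 2 ^ (n + 1) := by
    rw [Nat.add_sub_cancel, sum_congr rfl hterm, sum_neg_distrib, hshift,
      sup'_univ_eq_subsetMaxSum_card, Fintype.card_fin, ← sum_neg_half_pow_mul_sum_choose_mul,
      sum_range_succ, Nat.sub_self, pow_zero, one_mul]
    simp only [subsetMaxSum_succ_eq_sum_choose_mul_sort]
    ring
  rw [hexpr]
  exact abs_half_pow_mul_sub_le
    (alternating_sum_mem_Icc_of_monotone (Tuple.monotone_sort x) fun i => hx _)
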